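/- arXiv:1506.09159 — 4 statements merged into one kernel-verified Lean document; each statement's English description precedes it below -/
import Mathlib

section
/- Let q ∈ (0,1), s ∈ (0,1) and x > 0. Then ([x]_q / [x+s]_q)^{1-s} ≤ Γ_q(x+s) / ([x]_q^s · Γ_q(x)) ≤ 1. -/
/-- The q-deformed Gamma function:
    `Γ_q(x) = (1-q)^(1-x) * ∏_{n=0}^∞ (1-q^(n+1))/(1-q^(n+x))`. -/
noncomputable def qGamma (q x : ℝ) : ℝ :=
  (1 - q) ^ (1 - x) * ∏' n : ℕ, (1 - q ^ ((n : ℝ) + 1)) / (1 - q ^ ((n : ℝ) + x))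

/-- The q-bracket: `[x]_q = (1-q^x)/(1-q)`. -/
noncomputable def qBracket (q x : ℝ) : ℝ := (1 - q ^ x) / (1 - q)

open Real Filter Finset Set Topology

/-!
With `ℓ c = log (1 - q ^ c)`, the infinite product gives
`Γ_q(x+s) / ([x]_q^s Γ_q(x)) = exp (∑ₙ (ℓ (n + x) - ℓ (n + x + s)) - s ℓ x)`, so everything
reduces to bounding that series. Weighted AM-GM makes `ℓ` concave on `(0, ∞)`, and `ℓ → 0` at
infinity. Concavity bounds `ℓ c - ℓ (c + s)` above by `s (ℓ c - ℓ (c + 1))` and, as `c + 1` lies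
between `c + s` and `c + s + 1`, bounds `ℓ (c + 1) - ℓ (c + 1 + s)` below by
`s (ℓ (c + s) - ℓ (c + s + 1))`; both bounds telescope.
-/

theorem geom_mean_one_sub_le_one_sub_geom_mean {a b t u : ℝ} (ha0 : 0 ≤ a) (ha1 : a ≤ 1)
    (hb0 : 0 ≤ b) (hb1 : b ≤ 1) (ht : 0 ≤ t) (hu : 0 ≤ u) (htu : t + u = 1) :
    (1 - a) ^ t * (1 - b) ^ u ≤ 1 - a ^ t * b ^ u := by
  have h := geom_mean_le_arith_mean2_weighted ht hu ha0 hb0 htu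
  have h' := geom_mean_le_arith_mean2_weighted ht hu (sub_nonneg.2 ha1) (sub_nonneg.2 hb1) htu
  linear_combination h + h' + htu

namespace ConcaveOn

variable {g : ℝ → ℝ} (hg : ConcaveOn ℝ (Ioi 0) g) {x s : ℝ}
include hg

theorem sub_add_le_mul_sub_add_one (hx : 0 < x) (hs0 : 0 ≤ s) (hs1 : s ≤ 1) :
    g x - g (x + s) ≤ s * (g x - g (x + 1)) := by
  have h := hg.2 (mem_Ioi.2 hx) (mem_Ioi.2 (by linarith : 0 < x + 1)) (sub_nonneg.2 hs1) hs0
    (sub_add_cancel 1 s)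
  simp only [smul_eq_mul] at h
  rw [show (1 - s) * x + s * (x + 1) = x + s by ring] at h
  linarith

variable (hx : 0 < x) (hs0 : 0 ≤ s) (hs1 : s ≤ 1)
include hx hs0 hs1

theorem sum_range_sub_le (N : ℕ) :
    ∑ n ∈ range N, (g (n + x) - g (n + x + s)) ≤ s * (g x - g (N + x)) :=
  calc ∑ n ∈ range N, (g (n + x) - g (n + x + s))
      ≤ ∑ n ∈ range N, s * (g (n + x) - g ((n + 1 : ℕ) + x)) :=
        sum_le_sum fun n _ => by
          rw [Nat.cast_succ, add_right_comm _ 1 x]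
          exact hg.sub_add_le_mul_sub_add_one (by positivity) hs0 hs1
    _ = s * (g x - g (N + x)) := by
        rw [← mul_sum, sum_range_sub' (fun n : ℕ => g (n + x)), Nat.cast_zero, zero_add]

theorem le_sum_range_sub (N : ℕ) :
    s * (g (x + s) - g (N + x + s)) ≤
      ∑ n ∈ range N, (g ((n + 1 : ℕ) + x) - g ((n + 1 : ℕ) + x + s)) :=
  calc s * (g (x + s) - g (N + x + s))
      = ∑ n ∈ range N, s * (g (n + x + s) - g ((n + 1 : ℕ) + x + s)) := by
        rw [← mul_sum, sum_range_sub' (fun n : ℕ => g (n + x + s)), Nat.cast_zero, zero_add]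
    _ ≤ ∑ n ∈ range N, (g ((n + 1 : ℕ) + x) - g ((n + 1 : ℕ) + x + s)) :=
        sum_le_sum fun n _ => by
          have h := hg.sub_add_le_mul_sub_add_one (x := n + x + s) (s := 1 - s) (by positivity)
            (by linarith) (by linarith)
          rw [show (n : ℝ) + x + s + (1 - s) = n + 1 + x by ring,
            show (n : ℝ) + x + s + 1 = n + 1 + x + s by ring] at h
          push_cast
          linarith

variable (hlim : Tendsto g atTop (𝓝 0))
  (hsum : Summable fun n : ℕ => g (n + x) - g (n + x + s))
include hlim hsum

theorem tsum_sub_le : ∑' n : ℕ, (g (n + x) - g (n + x + s)) ≤ s * g x := by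
  have hgN : Tendsto (fun N : ℕ => g (N + x)) atTop (𝓝 0) :=
    hlim.comp (tendsto_atTop_add_const_right _ x tendsto_natCast_atTop_atTop)
  have hbound : Tendsto (fun N : ℕ => s * (g x - g (N + x))) atTop (𝓝 (s * g x)) := by
    simpa using (tendsto_const_nhds.sub hgN).const_mul s
  exact le_of_tendsto_of_tendsto' hsum.hasSum.tendsto_sum_nat hbound
    (hg.sum_range_sub_le hx hs0 hs1)

theorem le_tsum_sub :
    g x - g (x + s) + s * g (x + s) ≤ ∑' n : ℕ, (g (n + x) - g (n + x + s)) := by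
  have hgN : Tendsto (fun N : ℕ => g (N + x + s)) atTop (𝓝 0) :=
    hlim.comp (tendsto_atTop_add_const_right _ s
      (tendsto_atTop_add_const_right _ x tendsto_natCast_atTop_atTop))
  have hbound : Tendsto (fun N : ℕ => g x - g (x + s) + s * (g (x + s) - g (N + x + s))) atTop
      (𝓝 (g x - g (x + s) + s * g (x + s))) := by
    simpa using tendsto_const_nhds.add ((tendsto_const_nhds.sub hgN).const_mul s)
  refine le_of_tendsto_of_tendsto' hbound
    (hsum.hasSum.tendsto_sum_nat.comp (tendsto_add_atTop_nat 1)) fun N => ?_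
  simp only [Function.comp_apply, sum_range_succ' _ N, Nat.cast_zero, zero_add]
  linarith [hg.le_sum_range_sub hx hs0 hs1 N]

end ConcaveOn

/-- `log (q^y; q)_∞`. -/
noncomputable def logQPochhammer (q y : ℝ) : ℝ := ∑' n : ℕ, log (1 - q ^ ((n : ℝ) + y))

section QGamma

variable {q : ℝ} (hq0 : 0 < q) (hq1 : q < 1)
include hq0 hq1

theorem one_sub_rpow_pos {c : ℝ} (hc : 0 < c) : 0 < 1 - q ^ c :=
  sub_pos.2 (rpow_lt_one hq0.le hq1 hc)

theorem concaveOn_log_one_sub_rpow : ConcaveOn ℝ (Ioi (0 : ℝ)) fun c => log (1 - q ^ c) := by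
  refine ⟨convex_Ioi 0, fun a ha b hb t u ht hu htu => ?_⟩
  have hA := one_sub_rpow_pos hq0 hq1 ha
  have hB := one_sub_rpow_pos hq0 hq1 hb
  simp only [smul_eq_mul]
  rw [← log_rpow hA, ← log_rpow hB, ← log_mul (by positivity) (by positivity)]
  refine log_le_log (by positivity) ?_
  rw [rpow_add hq0, mul_comm t, mul_comm u, rpow_mul hq0.le, rpow_mul hq0.le]
  exact geom_mean_one_sub_le_one_sub_geom_mean (by positivity) (by linarith) (by positivity)
    (by linarith) ht hu htu

theorem tendsto_log_one_sub_rpow_atTop :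
    Tendsto (fun c : ℝ => log (1 - q ^ c)) atTop (𝓝 0) := by
  have h := (tendsto_rpow_atTop_of_base_lt_one q (by linarith) hq1).const_sub 1
  simpa [Function.comp_def] using
    (continuousAt_log (by norm_num : (1 : ℝ) - 0 ≠ 0)).tendsto.comp h

theorem summable_log_one_sub_rpow (y : ℝ) :
    Summable fun n : ℕ => log (1 - q ^ ((n : ℝ) + y)) := by
  have h : Summable fun n : ℕ => -(q ^ y * q ^ n) :=
    ((summable_geometric_of_lt_one hq0.le hq1).mul_left _).neg
  refine (summable_log_one_add_of_summable h).congr fun n => ?_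
  rw [rpow_add hq0, rpow_natCast, mul_comm, sub_eq_add_neg]

theorem hasSum_log_one_sub_rpow_sub (x s : ℝ) :
    HasSum (fun n : ℕ => log (1 - q ^ ((n : ℝ) + x)) - log (1 - q ^ ((n : ℝ) + x + s)))
      (logQPochhammer q x - logQPochhammer q (x + s)) := by
  simpa only [add_assoc, logQPochhammer] using (summable_log_one_sub_rpow hq0 hq1 x).hasSum.sub
    (summable_log_one_sub_rpow hq0 hq1 (x + s)).hasSum

theorem qGamma_eq_exp {y : ℝ} (hy : 0 < y) :
    qGamma q y = exp ((1 - y) * log (1 - q) + logQPochhammer q 1 - logQPochhammer q y) := by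
  have hpos (n : ℕ) : 0 < (1 - q ^ ((n : ℝ) + 1)) / (1 - q ^ ((n : ℝ) + y)) :=
    div_pos (one_sub_rpow_pos hq0 hq1 (by positivity)) (one_sub_rpow_pos hq0 hq1 (by positivity))
  have hlog (n : ℕ) : log ((1 - q ^ ((n : ℝ) + 1)) / (1 - q ^ ((n : ℝ) + y))) =
      log (1 - q ^ ((n : ℝ) + 1)) - log (1 - q ^ ((n : ℝ) + y)) :=
    log_div (one_sub_rpow_pos hq0 hq1 (by positivity)).ne'
      (one_sub_rpow_pos hq0 hq1 (by positivity)).ne'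
  have h1 := summable_log_one_sub_rpow hq0 hq1 1
  have h2 := summable_log_one_sub_rpow hq0 hq1 y
  rw [qGamma, ← rexp_tsum_eq_tprod hpos (by simpa only [hlog] using h1.sub h2),
    rpow_def_of_pos (sub_pos.2 hq1), ← exp_add, add_sub_assoc, logQPochhammer, logQPochhammer,
    ← h1.tsum_sub h2]
  simp only [hlog, mul_comm]

theorem qBracket_pos {x : ℝ} (hx : 0 < x) : 0 < qBracket q x :=
  div_pos (one_sub_rpow_pos hq0 hq1 hx) (sub_pos.2 hq1)

theorem log_qBracket {x : ℝ} (hx : 0 < x) :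
    log (qBracket q x) = log (1 - q ^ x) - log (1 - q) :=
  log_div (one_sub_rpow_pos hq0 hq1 hx).ne' (sub_pos.2 hq1).ne'

theorem qGamma_add_div_eq_exp {x s : ℝ} (hx : 0 < x) (hxs : 0 < x + s) :
    qGamma q (x + s) / (qBracket q x ^ s * qGamma q x) =
      exp (logQPochhammer q x - logQPochhammer q (x + s) - s * log (1 - q ^ x)) := by
  rw [qGamma_eq_exp hq0 hq1 hxs, qGamma_eq_exp hq0 hq1 hx,
    rpow_def_of_pos (qBracket_pos hq0 hq1 hx), log_qBracket hq0 hq1 hx, ← exp_add, ← exp_sub]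
  congr 1
  ring

theorem qBracket_div_qBracket_rpow {x y : ℝ} (hx : 0 < x) (hy : 0 < y) (r : ℝ) :
    (qBracket q x / qBracket q y) ^ r = exp (r * (log (1 - q ^ x) - log (1 - q ^ y))) := by
  rw [rpow_def_of_pos (div_pos (qBracket_pos hq0 hq1 hx) (qBracket_pos hq0 hq1 hy)),
    log_div (qBracket_pos hq0 hq1 hx).ne' (qBracket_pos hq0 hq1 hy).ne', log_qBracket hq0 hq1 hx,
    log_qBracket hq0 hq1 hy]
  congr 1
  ring

end QGamma

theorem qWendel_inequality (q s x : ℝ) (hq : q ∈ Set.Ioo (0 : ℝ) 1)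
    (hs : s ∈ Set.Ioo (0 : ℝ) 1) (hx : 0 < x) :
    (qBracket q x / qBracket q (x + s)) ^ (1 - s) ≤
      qGamma q (x + s) / (qBracket q x ^ s * qGamma q x) ∧
    qGamma q (x + s) / (qBracket q x ^ s * qGamma q x) ≤ 1 := by
  obtain ⟨hq0, hq1⟩ := hq
  obtain ⟨hs0, hs1⟩ := hs
  have hxs : 0 < x + s := by linarith
  have hD := hasSum_log_one_sub_rpow_sub hq0 hq1 x s
  have hconc := concaveOn_log_one_sub_rpow hq0 hq1
  have hlim := tendsto_log_one_sub_rpow_atTop hq0 hq1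
  have hlower := hconc.le_tsum_sub hx hs0.le hs1.le hlim hD.summable
  have hupper := hconc.tsum_sub_le hx hs0.le hs1.le hlim hD.summable
  rw [qGamma_add_div_eq_exp hq0 hq1 hx hxs, qBracket_div_qBracket_rpow hq0 hq1 hx hxs,
    ← hD.tsum_eq]
  exact ⟨exp_le_exp.2 (by linarith), exp_le_one_iff.2 (by linarith)⟩
end

section
/- Let q ∈ (0,1) and α, β ∈ (0,1). Then the limit as x → ∞ of [x]_q^{β-α} · Γ_q(x+α) / Γ_q(x+β) equals 1. -/
/-!
Writing `(a; q)_∞ = ∏ (1 - a qⁿ)`, the definition reads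
`Γ_q(y) = (1 - q)^(1 - y) (q; q)_∞ / (q^y; q)_∞`, so the quantity in question is
`(1 - q^x)^(β - α) (q^(x+β); q)_∞ / (q^(x+α); q)_∞`. Each infinite product tends to `1` as its
argument tends to `∞`, by dominated convergence with the bound `q^(n + y) ≤ qⁿ`.
-/

open Filter Topology

/-- The `q`-Pochhammer symbol `(q^y; q)_∞`. -/
noncomputable def qPochhammerInf (q y : ℝ) : ℝ := ∏' n : ℕ, (1 - q ^ ((n : ℝ) + y))

section qPochhammerInf

variable {q : ℝ}

lemma summable_rpow_natCast_add (hq0 : 0 < q) (hq1 : q < 1) (y : ℝ) :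
    Summable fun n : ℕ => q ^ ((n : ℝ) + y) := by
  simpa [Real.rpow_add hq0] using (summable_geometric_of_lt_one hq0.le hq1).mul_right (q ^ y)

lemma multipliable_one_sub_rpow_natCast_add (hq0 : 0 < q) (hq1 : q < 1) (y : ℝ) :
    Multipliable fun n : ℕ => 1 - q ^ ((n : ℝ) + y) := by
  simpa [sub_eq_add_neg] using
    Real.multipliable_one_add_of_summable (summable_rpow_natCast_add hq0 hq1 y).neg

lemma qPochhammerInf_ne_zero (hq0 : 0 < q) (hq1 : q < 1) {y : ℝ} (hy : 0 < y) :
    qPochhammerInf q y ≠ 0 := by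
  have hlt (n : ℕ) : q ^ ((n : ℝ) + y) < 1 := Real.rpow_lt_one hq0.le hq1 (by positivity)
  simpa [qPochhammerInf, sub_eq_add_neg] using
    tprod_one_add_ne_zero_of_summable (f := fun n : ℕ => -q ^ ((n : ℝ) + y))
      (fun n => by linarith [hlt n])
      (by simpa [abs_of_pos (Real.rpow_pos_of_pos hq0 _)] using
        summable_rpow_natCast_add hq0 hq1 y)

lemma tendsto_qPochhammerInf_atTop (hq0 : 0 < q) (hq1 : q < 1) :
    Tendsto (qPochhammerInf q) atTop (𝓝 1) := by
  have hterm (n : ℕ) : Tendsto (fun y : ℝ => -q ^ ((n : ℝ) + y)) atTop (𝓝 0) := by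
    simpa using ((tendsto_rpow_atTop_of_base_lt_one q (by linarith) hq1).comp
      (tendsto_atTop_add_const_left _ (n : ℝ) tendsto_id)).neg
  have hbound : ∀ᶠ y : ℝ in atTop, ∀ n : ℕ, ‖-q ^ ((n : ℝ) + y)‖ ≤ q ^ n := by
    filter_upwards [eventually_ge_atTop 0] with y hy n
    rw [norm_neg, Real.norm_of_nonneg (Real.rpow_nonneg hq0.le _), ← Real.rpow_natCast]
    exact Real.rpow_le_rpow_of_exponent_ge hq0 hq1.le (by linarith)
  change Tendsto (fun y : ℝ => ∏' n : ℕ, (1 - q ^ ((n : ℝ) + y))) atTop (𝓝 1)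
  simpa [sub_eq_add_neg] using
    tendsto_tprod_one_add_of_dominated_convergence (g := 0)
      (summable_geometric_of_lt_one hq0.le hq1) hterm hbound

end qPochhammerInf

lemma qGamma_eq_mul_qPochhammerInf_div {q y : ℝ} (hq0 : 0 < q) (hq1 : q < 1) (hy : 0 < y) :
    qGamma q y = (1 - q) ^ (1 - y) * (qPochhammerInf q 1 / qPochhammerInf q y) := by
  rw [qGamma, (multipliable_one_sub_rpow_natCast_add hq0 hq1 1).tprod_div₀
    (multipliable_one_sub_rpow_natCast_add hq0 hq1 y) (qPochhammerInf_ne_zero hq0 hq1 hy)]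
  rfl

lemma qGamma_div_qGamma {q a b : ℝ} (hq0 : 0 < q) (hq1 : q < 1) (ha : 0 < a) (hb : 0 < b) :
    qGamma q a / qGamma q b = (1 - q) ^ (b - a) * (qPochhammerInf q b / qPochhammerInf q a) := by
  have h1q : 0 < 1 - q := by linarith
  have hP1 := qPochhammerInf_ne_zero hq0 hq1 one_pos
  have hPa := qPochhammerInf_ne_zero hq0 hq1 ha
  have hPb := qPochhammerInf_ne_zero hq0 hq1 hb
  rw [qGamma_eq_mul_qPochhammerInf_div hq0 hq1 ha, qGamma_eq_mul_qPochhammerInf_div hq0 hq1 hb,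
    show 1 - a = (1 - b) + (b - a) by ring, Real.rpow_add h1q]
  have : (1 - q) ^ (1 - b) ≠ 0 := (Real.rpow_pos_of_pos h1q _).ne'
  field_simp

theorem qWendel_limit2_general (q α β : ℝ) (hq : q ∈ Set.Ioo (0 : ℝ) 1) :
    Filter.Tendsto (fun x : ℝ => qBracket q x ^ (β - α) * qGamma q (x + α) / qGamma q (x + β))
      Filter.atTop (nhds 1) := by
  obtain ⟨hq0, hq1⟩ := hq
  have hqx : Tendsto (fun x : ℝ => q ^ x) atTop (𝓝 0) :=
    tendsto_rpow_atTop_of_base_lt_one q (by linarith) hq1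
  have hbracket : Tendsto (fun x : ℝ => (1 - q ^ x) ^ (β - α)) atTop (𝓝 1) := by
    simpa using ((tendsto_const_nhds (x := (1 : ℝ))).sub hqx).rpow_const (p := β - α)
      (Or.inl (by norm_num))
  have hshift (c : ℝ) : Tendsto (fun x : ℝ => qPochhammerInf q (x + c)) atTop (𝓝 1) :=
    (tendsto_qPochhammerInf_atTop hq0 hq1).comp (tendsto_atTop_add_const_right _ c tendsto_id)
  have hlim := hbracket.mul ((hshift β).div (hshift α) one_ne_zero)
  simp only [Pi.div_apply, div_one, mul_one] at hlim
  refine hlim.congr' ?_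
  filter_upwards [eventually_gt_atTop 0, eventually_gt_atTop (-α), eventually_gt_atTop (-β)]
    with x hx hxα hxβ
  have hqx1 : q ^ x < 1 := Real.rpow_lt_one hq0.le hq1 hx
  rw [mul_div_assoc, qGamma_div_qGamma hq0 hq1 (by linarith) (by linarith), qBracket,
    Real.div_rpow (by linarith) (by linarith), add_sub_add_left_eq_sub]
  have : (1 - q) ^ (β - α) ≠ 0 := (Real.rpow_pos_of_pos (by linarith) _).ne'
  field_simp

theorem qWendel_limit2 (q α β : ℝ) (hq : q ∈ Set.Ioo (0 : ℝ) 1)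
    (hα : α ∈ Set.Ioo (0 : ℝ) 1) (hβ : β ∈ Set.Ioo (0 : ℝ) 1) :
    Filter.Tendsto (fun x : ℝ => qBracket q x ^ (β - α) * qGamma q (x + α) / qGamma q (x + β))
      Filter.atTop (nhds 1) :=
  qWendel_limit2_general q α β hq
end

section
/- Let q ∈ (0,1) be fixed. Then the function F defined for x > 0 by F(x) = [x]_q^{-1/2} · Γ_q(x+1) / Γ_q(x + 1/2) is strictly decreasing on (0,∞) and tends to 1 as x → ∞; consequently F(x) > 1 for all x > 0. -/
/-!
Put `t = q ^ x ∈ (0, 1)`. The infinite products in `Γ_q` telescope, and the ratio `F` satisfies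
`F(x)² = ∏ₙ (1 - √q t qⁿ)² / ((1 - t qⁿ) (1 - t qⁿ⁺¹))`, a product of values of
`w ↦ (1 - s w)² / ((1 - w) (1 - s² w))` at `w = t qⁿ`, with `s = √q`. This function equals `1` at
`w = 0`, is `1 + O(w)`, and is strictly increasing on `[0, 1)`: the cross-multiplied difference of
its values at `u < v` is `(v - u) (1 - s)² (1 - s² u v) > 0`. As `x` increases, `t` decreases to
`0`, so `F` decreases strictly to `1`.
-/

open Real Filter Topology Set

namespace QGamma

variable {q : ℝ}

lemma summable_log_one_sub_mul_pow (a : ℝ) (hq0 : 0 ≤ q) (hq1 : q < 1) :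
    Summable fun n : ℕ => log (1 - a * q ^ n) := by
  simpa [sub_eq_add_neg] using
    Real.summable_log_one_add_of_summable ((summable_geometric_of_lt_one hq0 hq1).mul_left (-a))

lemma one_sub_mul_pow_pos {a : ℝ} (ha0 : 0 ≤ a) (ha1 : a < 1) (hq0 : 0 ≤ q) (hq1 : q ≤ 1)
    (n : ℕ) : 0 < 1 - a * q ^ n := by
  nlinarith [pow_le_one₀ hq0 hq1 (n := n), pow_nonneg hq0 n]

/-- `log (a; q)_∞`. -/
noncomputable def logQPochhammer (q a : ℝ) : ℝ := ∑' n : ℕ, log (1 - a * q ^ n)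

lemma logQPochhammer_eq_log_add (a : ℝ) (hq0 : 0 ≤ q) (hq1 : q < 1) :
    logQPochhammer q a = log (1 - a) + logQPochhammer q (a * q) := by
  rw [logQPochhammer, (summable_log_one_sub_mul_pow a hq0 hq1).tsum_eq_zero_add, logQPochhammer]
  simp only [pow_zero, mul_one, pow_succ', mul_assoc]

lemma qGamma_eq_exp {y : ℝ} (hq0 : 0 < q) (hq1 : q < 1) (hy : 0 < y) :
    qGamma q y = (1 - q) ^ (1 - y) * exp (logQPochhammer q q - logQPochhammer q (q ^ y)) := by
  have hshift : ∀ (c : ℝ) (n : ℕ), q ^ ((n : ℝ) + c) = q ^ c * q ^ n := fun c n => by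
    rw [add_comm, rpow_add hq0, rpow_natCast]
  have hnum : ∀ n : ℕ, 0 < 1 - q * q ^ n := one_sub_mul_pow_pos hq0.le hq1 hq0.le hq1.le
  have hden : ∀ n : ℕ, 0 < 1 - q ^ y * q ^ n :=
    one_sub_mul_pow_pos (rpow_nonneg hq0.le y) (rpow_lt_one hq0.le hq1 hy) hq0.le hq1.le
  have hlog : ∀ n : ℕ, log ((1 - q * q ^ n) / (1 - q ^ y * q ^ n)) =
      log (1 - q * q ^ n) - log (1 - q ^ y * q ^ n) := fun n => log_div (hnum n).ne' (hden n).ne'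
  have hL (a : ℝ) := summable_log_one_sub_mul_pow a hq0.le hq1
  simp only [qGamma, hshift, rpow_one]
  rw [logQPochhammer, logQPochhammer, ← (hL q).tsum_sub (hL _), ← rexp_tsum_eq_tprod
    (fun n => div_pos (hnum n) (hden n)) (by simpa only [hlog] using (hL q).sub (hL _))]
  simp only [hlog]

noncomputable def logRatio (s w : ℝ) : ℝ :=
  2 * log (1 - s * w) - log (1 - w) - log (1 - s ^ 2 * w)

variable {s : ℝ}

@[simp]
lemma logRatio_zero (s : ℝ) : logRatio s 0 = 0 := by simp [logRatio]

lemma logRatio_eq_log_div {w : ℝ} (hs0 : 0 ≤ s) (hs1 : s ≤ 1) (hw0 : 0 ≤ w) (hw1 : w < 1) :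
    logRatio s w = log ((1 - s * w) ^ 2 / ((1 - w) * (1 - s ^ 2 * w))) := by
  have h1 : 0 < 1 - s * w := by nlinarith
  have h2 : 0 < 1 - s ^ 2 * w := by nlinarith [mul_le_one₀ hs1 hs0 hs1]
  rw [log_div (by positivity) (by nlinarith), log_mul (by linarith) h2.ne', log_pow, logRatio]
  push_cast
  ring

lemma logRatio_strictMonoOn (hs0 : 0 ≤ s) (hs1 : s < 1) : StrictMonoOn (logRatio s) (Ico 0 1) := by
  rintro u ⟨hu0, hu1⟩ v ⟨hv0, hv1⟩ huv
  have hs2 : s ^ 2 ≤ 1 := pow_le_one₀ hs0 hs1.le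
  rw [logRatio_eq_log_div hs0 hs1.le hu0 hu1, logRatio_eq_log_div hs0 hs1.le hv0 hv1]
  have hsu : 0 < 1 - s * u := by linarith [mul_le_of_le_one_left hu0 hs1.le]
  have hs2u : 0 < 1 - s ^ 2 * u := by linarith [mul_le_of_le_one_left hu0 hs2]
  have hs2v : 0 < 1 - s ^ 2 * v := by linarith [mul_le_of_le_one_left hv0 hs2]
  refine log_lt_log (by positivity) ?_
  rw [div_lt_div_iff₀ (mul_pos (by linarith) hs2u) (mul_pos (by linarith) hs2v)]
  have hfactor : (1 - s * v) ^ 2 * ((1 - u) * (1 - s ^ 2 * u))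
      - (1 - s * u) ^ 2 * ((1 - v) * (1 - s ^ 2 * v))
      = (v - u) * (1 - s) ^ 2 * (1 - s ^ 2 * (u * v)) := by ring
  have huv1 : u * v < 1 := mul_lt_one_of_nonneg_of_lt_one_left hu0 hu1 hv1.le
  have h1 : 0 < 1 - s ^ 2 * (u * v) := by
    linarith [mul_le_of_le_one_left (mul_nonneg hu0 hv0) hs2]
  have h2 : 0 < (1 - s) ^ 2 := pow_pos (sub_pos.2 hs1) 2
  have h3 : 0 < v - u := sub_pos.2 huv
  linarith [mul_pos (mul_pos h3 h2) h1]

lemma logRatio_le {w : ℝ} (hs0 : 0 ≤ s) (hs1 : s ≤ 1) (hw0 : 0 ≤ w) (hw1 : w < 1) :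
    logRatio s w ≤ 2 * w / (1 - w) := by
  have h1w : 0 < 1 - w := by linarith
  have hsw : log (1 - s * w) ≤ 0 := log_nonpos (by nlinarith) (by nlinarith)
  have hs2w : log (1 - w) ≤ log (1 - s ^ 2 * w) :=
    log_le_log h1w (by nlinarith [pow_le_one₀ hs0 hs1 (n := 2)])
  have hneg : 1 - (1 - w)⁻¹ ≤ log (1 - w) := one_sub_inv_le_log_of_pos h1w
  have : 1 - (1 - w)⁻¹ = -(w / (1 - w)) := by field_simp; ring
  rw [logRatio]
  linarith [show 2 * w / (1 - w) = 2 * (w / (1 - w)) by ring]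

noncomputable def logRatioSum (q t : ℝ) : ℝ := ∑' n : ℕ, logRatio (√q) (t * q ^ n)

lemma summable_logRatio (s t : ℝ) (hq0 : 0 ≤ q) (hq1 : q < 1) :
    Summable fun n : ℕ => logRatio s (t * q ^ n) := by
  have h (a : ℝ) := summable_log_one_sub_mul_pow a hq0 hq1
  refine ((((h (s * t)).mul_left 2).sub (h t)).sub (h (s ^ 2 * t))).congr fun n => ?_
  simp only [logRatio, mul_assoc]

lemma logRatioSum_eq (t : ℝ) (hq0 : 0 ≤ q) (hq1 : q < 1) :
    logRatioSum q t =
      2 * logQPochhammer q (√q * t) - 2 * logQPochhammer q (t * q) - log (1 - t) := by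
  have h (a : ℝ) := summable_log_one_sub_mul_pow a hq0 hq1
  have hterm : ∀ n : ℕ, logRatio (√q) (t * q ^ n) =
      2 * log (1 - √q * t * q ^ n) - log (1 - t * q ^ n) - log (1 - t * q * q ^ n) := fun n => by
    rw [logRatio, sq_sqrt hq0]
    ring_nf
  have hL := logQPochhammer_eq_log_add t hq0 hq1
  unfold logQPochhammer at hL ⊢
  rw [logRatioSum, tsum_congr hterm, (((h _).mul_left 2).sub (h t)).tsum_sub (h _),
    ((h _).mul_left 2).tsum_sub (h t), tsum_mul_left]
  linarith

@[simp]
lemma logRatioSum_zero (q : ℝ) : logRatioSum q 0 = 0 := by simp [logRatioSum]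

lemma mul_pow_mem_Ico {t : ℝ} (ht : t ∈ Ico (0 : ℝ) 1) (hq0 : 0 ≤ q) (hq1 : q ≤ 1) (n : ℕ) :
    t * q ^ n ∈ Ico (0 : ℝ) 1 :=
  ⟨mul_nonneg ht.1 (pow_nonneg hq0 n),
    (mul_le_of_le_one_right ht.1 (pow_le_one₀ hq0 hq1)).trans_lt ht.2⟩

lemma logRatioSum_strictMonoOn (hq0 : 0 ≤ q) (hq1 : q < 1) :
    StrictMonoOn (logRatioSum q) (Ico 0 1) := by
  intro t ht u hu htu
  have hmono := logRatio_strictMonoOn (sqrt_nonneg q) ((sqrt_lt' one_pos).2 (by rwa [one_pow]))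
  refine (summable_logRatio _ t hq0 hq1).tsum_lt_tsum (i := 0) (fun n => ?_) ?_
    (summable_logRatio _ u hq0 hq1)
  · exact hmono.monotoneOn (mul_pow_mem_Ico ht hq0 hq1.le n) (mul_pow_mem_Ico hu hq0 hq1.le n)
      (mul_le_mul_of_nonneg_right htu.le (pow_nonneg hq0 n))
  · simpa using hmono ht hu htu

lemma logRatioSum_le {t : ℝ} (hq0 : 0 ≤ q) (hq1 : q < 1) (ht : t ∈ Ico (0 : ℝ) 1) :
    logRatioSum q t ≤ 2 * t / (1 - t) * (1 - q)⁻¹ := by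
  have hterm : ∀ n : ℕ, logRatio (√q) (t * q ^ n) ≤ 2 * t / (1 - t) * q ^ n := fun n => by
    obtain ⟨h0, h1⟩ := mul_pow_mem_Ico ht hq0 hq1.le n
    refine (logRatio_le (sqrt_nonneg q) (sqrt_le_one.mpr hq1.le) h0 h1).trans ?_
    have htqn : t * q ^ n ≤ t := mul_le_of_le_one_right ht.1 (pow_le_one₀ hq0 hq1.le)
    calc 2 * (t * q ^ n) / (1 - t * q ^ n) ≤ 2 * (t * q ^ n) / (1 - t) :=
          div_le_div_of_nonneg_left (by positivity) (by linarith [ht.2]) (by linarith)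
      _ = 2 * t / (1 - t) * q ^ n := by ring
  have := (summable_logRatio _ t hq0 hq1).tsum_le_tsum hterm
    ((summable_geometric_of_lt_one hq0 hq1).mul_left _)
  rwa [tsum_mul_left, tsum_geometric_of_lt_one hq0 hq1] at this

lemma tendsto_logRatioSum_nhdsGE_zero (hq0 : 0 ≤ q) (hq1 : q < 1) :
    Tendsto (logRatioSum q) (𝓝[≥] 0) (𝓝 0) := by
  have hbound : Tendsto (fun t : ℝ => 2 * t / (1 - t) * (1 - q)⁻¹) (𝓝[≥] 0) (𝓝 0) := by
    refine tendsto_nhdsWithin_of_tendsto_nhds ?_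
    have : ContinuousAt (fun t : ℝ => 2 * t / (1 - t) * (1 - q)⁻¹) 0 := by
      fun_prop (disch := norm_num)
    simpa using this.tendsto
  refine tendsto_of_tendsto_of_tendsto_of_le_of_le' tendsto_const_nhds hbound ?_ ?_
  all_goals filter_upwards [Ico_mem_nhdsGE zero_lt_one] with t ht
  · simpa using (logRatioSum_strictMonoOn hq0 hq1).monotoneOn ⟨le_rfl, zero_lt_one⟩ ht ht.1
  · exact logRatioSum_le hq0 hq1 ht

lemma qGammaRatio_eq_exp {x : ℝ} (hq0 : 0 < q) (hq1 : q < 1) (hx : 0 < x) :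
    qBracket q x ^ (-(1 / 2) : ℝ) * qGamma q (x + 1) / qGamma q (x + 1 / 2) =
      exp (logRatioSum q (q ^ x) / 2) := by
  have h1q : 0 < 1 - q := by linarith
  have h1t : 0 < 1 - q ^ x := by linarith [rpow_lt_one hq0.le hq1 hx]
  have hbracket : qBracket q x ^ (-(1 / 2) : ℝ) =
      exp ((log (1 - q ^ x) - log (1 - q)) * (-(1 / 2))) := by
    rw [qBracket, rpow_def_of_pos (div_pos h1t h1q), log_div h1t.ne' h1q.ne']
  have hshift1 : q ^ (x + 1) = q ^ x * q := rpow_add_one hq0.ne' x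
  have hshift2 : q ^ (x + 1 / 2) = √q * q ^ x := by
    rw [rpow_add hq0, sqrt_eq_rpow, mul_comm]
  rw [hbracket, qGamma_eq_exp hq0 hq1 (by linarith), qGamma_eq_exp hq0 hq1 (by linarith),
    rpow_def_of_pos h1q, rpow_def_of_pos h1q, hshift1, hshift2, ← exp_add, ← exp_add, ← exp_add,
    ← exp_sub, logRatioSum_eq _ hq0.le hq1]
  ring_nf

end QGamma

open QGamma in
theorem qGammaRatio_F (q : ℝ) (hq : q ∈ Set.Ioo (0 : ℝ) 1) :
    StrictAntiOn (fun x : ℝ => qBracket q x ^ (-(1 / 2) : ℝ) * qGamma q (x + 1) / qGamma q (x + 1 / 2))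
      (Set.Ioi (0 : ℝ)) ∧
    Filter.Tendsto (fun x : ℝ => qBracket q x ^ (-(1 / 2) : ℝ) * qGamma q (x + 1) / qGamma q (x + 1 / 2))
      Filter.atTop (nhds 1) ∧
    ∀ x : ℝ, 0 < x →
      1 < qBracket q x ^ (-(1 / 2) : ℝ) * qGamma q (x + 1) / qGamma q (x + 1 / 2) := by
  obtain ⟨hq0, hq1⟩ := hq
  have hmono := logRatioSum_strictMonoOn hq0.le hq1
  have hpow : ∀ x : ℝ, 0 < x → q ^ x ∈ Set.Ico 0 1 := fun x hx =>
    ⟨rpow_nonneg hq0.le x, rpow_lt_one hq0.le hq1 hx⟩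
  refine ⟨fun x hx y hy hxy => ?_, ?_, fun x hx => ?_⟩
  · simp only [qGammaRatio_eq_exp hq0 hq1 hx, qGammaRatio_eq_exp hq0 hq1 hy, exp_lt_exp]
    linarith [hmono (hpow y hy) (hpow x hx) (rpow_lt_rpow_of_exponent_gt hq0 hq1 hxy)]
  · have hpow_tendsto : Tendsto (fun x : ℝ => q ^ x) atTop (𝓝[≥] (0 : ℝ)) :=
      tendsto_nhdsWithin_iff.2 ⟨tendsto_rpow_atTop_of_base_lt_one q (by linarith) hq1,
        Eventually.of_forall fun x => mem_Ici.2 (rpow_nonneg hq0.le x)⟩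
    have := (continuous_exp.tendsto _).comp
      (((tendsto_logRatioSum_nhdsGE_zero hq0.le hq1).comp hpow_tendsto).div_const 2)
    rw [zero_div, exp_zero] at this
    refine this.congr' ?_
    filter_upwards [eventually_gt_atTop 0] with x hx
    exact (qGammaRatio_eq_exp hq0 hq1 hx).symm
  · rw [qGammaRatio_eq_exp hq0 hq1 hx, one_lt_exp_iff]
    linarith [logRatioSum_zero q ▸ hmono ⟨le_rfl, zero_lt_one⟩ (hpow x hx) (rpow_pos_of_pos hq0 x)]
end

section
/- Let q ∈ (0,1) and x > 0. Then ψ_q(x+1) - ψ_q(x + 1/2) ≥ -(1/2) · (q^{x+1/2} ln q)/(1 - q^{x+1/2}). -/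
/-- The q-analogue of the digamma function:
    `ψ_q(x) = -log(1-q) + (log q) · ∑_{n=0}^∞ q^(n+x)/(1-q^(n+x))`. -/
noncomputable def qPsi (q x : ℝ) : ℝ :=
  -Real.log (1 - q) + Real.log q * ∑' n : ℕ, q ^ ((n : ℝ) + x) / (1 - q ^ ((n : ℝ) + x))

/-! Writing `f(t) = q^t/(1-q^t)`, the difference is `log q · (∑ f(n+x+1) - ∑ f(n+x+1/2))`.
Since `f` is midpoint convex, `f(n+x+1) ≤ (f(n+x+1/2) + f(n+x+3/2))/2`; summing over `n` and
shifting the index in the second series bounds `∑ f(n+x+1)` by `∑ f(n+x+1/2) - f(x+1/2)/2`.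
Multiplying by `log q < 0` reverses the inequality. -/

open Real

noncomputable def qPsiTerm (q t : ℝ) : ℝ := q ^ t / (1 - q ^ t)

lemma qPsi_eq_tsum_qPsiTerm (q x : ℝ) :
    qPsi q x = -log (1 - q) + log q * ∑' n : ℕ, qPsiTerm q (n + x) := rfl

/-- The algebraic form of the midpoint convexity of `t ↦ q^t/(1-q^t)`, with `u = q^t`, `r = q^h`. -/
lemma div_one_sub_mul_le_midpoint {u r : ℝ} (hu0 : 0 ≤ u) (hu1 : u < 1) (hr0 : 0 ≤ r)
    (hr1 : r ≤ 1) :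
    u * r / (1 - u * r) ≤ (u / (1 - u) + u * r ^ 2 / (1 - u * r ^ 2)) / 2 := by
  have h1 : 0 < 1 - u := by linarith
  have h2 : 0 < 1 - u * r := by nlinarith
  have h3 : 0 < 1 - u * r ^ 2 := by nlinarith [mul_nonneg (mul_nonneg hu0 hr0) (sub_nonneg.2 hr1)]
  have hgap : (u / (1 - u) + u * r ^ 2 / (1 - u * r ^ 2)) / 2 - u * r / (1 - u * r) =
      u * (1 - r) ^ 2 * (1 + r * u) / (2 * ((1 - u) * (1 - u * r) * (1 - u * r ^ 2))) := by
    field_simp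
    ring
  have : 0 ≤ u * (1 - r) ^ 2 * (1 + r * u) / (2 * ((1 - u) * (1 - u * r) * (1 - u * r ^ 2))) := by
    positivity
  linarith

section qPsiTerm

variable {q : ℝ} (hq : q ∈ Set.Ioo (0 : ℝ) 1)
include hq

lemma qPsiTerm_pos {t : ℝ} (ht : 0 < t) : 0 < qPsiTerm q t :=
  div_pos (rpow_pos_of_pos hq.1 t) (sub_pos.2 (rpow_lt_one hq.1.le hq.2 ht))

lemma qPsiTerm_add_le {c s : ℝ} (hc : 0 < c) (hs : 0 ≤ s) :
    qPsiTerm q (s + c) ≤ q ^ s * qPsiTerm q c := by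
  have hq0 := hq.1
  have hqs : q ^ s ≤ 1 := rpow_le_one hq0.le hq.2.le hs
  have hqc : 0 < 1 - q ^ c := sub_pos.2 (rpow_lt_one hq0.le hq.2 hc)
  rw [qPsiTerm, qPsiTerm, rpow_add hq0, mul_div_assoc]
  gcongr
  exact mul_le_of_le_one_left (by positivity) hqs

lemma summable_qPsiTerm {c : ℝ} (hc : 0 < c) :
    Summable fun n : ℕ => qPsiTerm q (n + c) := by
  refine Summable.of_nonneg_of_le (fun n => (qPsiTerm_pos hq (by positivity)).le)
    (fun n => ?_) ((summable_geometric_of_lt_one hq.1.le hq.2).mul_right (qPsiTerm q c))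
  simpa only [rpow_natCast] using qPsiTerm_add_le hq hc (Nat.cast_nonneg n)

lemma qPsiTerm_add_le_midpoint {t h : ℝ} (ht : 0 < t) (hh : 0 ≤ h) :
    qPsiTerm q (t + h) ≤ (qPsiTerm q t + qPsiTerm q (t + 2 * h)) / 2 := by
  have hsq : q ^ (t + 2 * h) = q ^ t * (q ^ h) ^ 2 := by
    rw [rpow_add hq.1, mul_comm 2 h, rpow_mul hq.1.le, rpow_two]
  simpa only [qPsiTerm, rpow_add hq.1 t h, hsq] using
    div_one_sub_mul_le_midpoint (rpow_nonneg hq.1.le t) (rpow_lt_one hq.1.le hq.2 ht)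
      (rpow_nonneg hq.1.le h) (rpow_le_one hq.1.le hq.2.le hh)

lemma tsum_qPsiTerm_eq_add_tsum_succ {c : ℝ} (hc : 0 < c) :
    ∑' n : ℕ, qPsiTerm q (n + c) = qPsiTerm q c + ∑' n : ℕ, qPsiTerm q (n + (c + 1)) := by
  rw [(summable_qPsiTerm hq hc).tsum_eq_zero_add]
  push_cast
  simp only [zero_add, add_assoc, add_comm 1 c]

lemma tsum_qPsiTerm_add_half_le {c : ℝ} (hc : 0 < c) :
    ∑' n : ℕ, qPsiTerm q (n + (c + 1 / 2)) ≤ ∑' n : ℕ, qPsiTerm q (n + c) - qPsiTerm q c / 2 := by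
  have hc' : 0 < c + 1 := by linarith
  have hmid : ∑' n : ℕ, qPsiTerm q (n + (c + 1 / 2)) ≤
      ∑' n : ℕ, (qPsiTerm q (n + c) + qPsiTerm q (n + (c + 1))) / 2 := by
    refine Summable.tsum_le_tsum (fun n => ?_) (summable_qPsiTerm hq (by positivity))
      (((summable_qPsiTerm hq hc).add (summable_qPsiTerm hq hc')).div_const 2)
    have h := qPsiTerm_add_le_midpoint hq (t := n + c) (h := 1 / 2) (by positivity) (by norm_num)
    ring_nf at h ⊢
    exact h
  rw [tsum_div_const, (summable_qPsiTerm hq hc).tsum_add (summable_qPsiTerm hq hc'),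
    tsum_qPsiTerm_eq_add_tsum_succ hq hc] at hmid
  rw [tsum_qPsiTerm_eq_add_tsum_succ hq hc]
  linarith

end qPsiTerm

theorem qPsi_diff_ge (q x : ℝ) (hq : q ∈ Set.Ioo (0 : ℝ) 1) (hx : 0 < x) :
    qPsi q (x + 1) - qPsi q (x + 1 / 2) ≥
      -(1 / 2) * (q ^ (x + 1 / 2) * Real.log q / (1 - q ^ (x + 1 / 2))) := by
  have hc : 0 < x + 1 / 2 := by linarith
  have hsum := tsum_qPsiTerm_add_half_le hq hc
  rw [add_assoc, add_halves] at hsum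
  have hlog : log q < 0 := log_neg hq.1 hq.2
  rw [qPsi_eq_tsum_qPsiTerm, qPsi_eq_tsum_qPsiTerm, mul_div_right_comm, ← qPsiTerm]
  linarith [mul_le_mul_of_nonpos_left hsum hlog.le]
end
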